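/- arXiv:2310.06545 — 2 statements merged into one kernel-verified Lean document; each statement's English description precedes it below -/
import Mathlib

section
/- Let f be a meromorphic function on a domain D ⊆ ℂ and let z_0 ∈ D be a zero of f of multiplicity n ≥ 1. If (n+1)·λ_Q − μ_Q ≥ 1, then z_0 is a zero of Q[f] of multiplicity at least (n+1)·λ_Q − μ_Q. -/
open Filter Metric Complex Set MeasureTheory
open scoped OnePoint Topology

noncomputable section

/-- The finite value of a point of the Riemann sphere (junk value `0` at `∞`). -/
def OnePoint.valD (u : OnePoint ℂ) : ℂ := Option.getD u 0

open Classical in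
/-- The chordal (spherical) distance on the Riemann sphere `OnePoint ℂ`. -/
def chordalDist (u v : OnePoint ℂ) : ℝ :=
  if u = ∞ then
    (if v = ∞ then 0 else 2 / Real.sqrt (1 + ‖v.valD‖ ^ 2))
  else if v = ∞ then 2 / Real.sqrt (1 + ‖u.valD‖ ^ 2)
  else 2 * ‖u.valD - v.valD‖ /
    (Real.sqrt (1 + ‖u.valD‖ ^ 2) * Real.sqrt (1 + ‖v.valD‖ ^ 2))

open Classical in
/-- The value of a meromorphic function viewed on the Riemann sphere: at a pole the
value is `∞`. -/
def sphValue (f : ℂ → ℂ) (z : ℂ) : OnePoint ℂ :=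
  if h : MeromorphicAt f z then
    (if meromorphicOrderAt f z < 0 then ∞ else (f z : OnePoint ℂ))
  else (f z : OnePoint ℂ)

/-- Locally uniform convergence on `D` with respect to the spherical (chordal) metric of a
sequence of meromorphic functions towards a sphere-valued limit function. -/
def SphLocUnifConvOn (F : ℕ → ℂ → ℂ) (g : ℂ → OnePoint ℂ) (D : Set ℂ) : Prop :=
  TendstoLocallyUniformlyOn (fun j z => chordalDist (sphValue (F j) z) (g z))
    (fun _ => 0) atTop D

/-- The limit function is either identically `∞` on `D`, or is (the sphere-valued version
of) a meromorphic function on `D`. -/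
def MeromOrInftyOn (g : ℂ → OnePoint ℂ) (D : Set ℂ) : Prop :=
  (∀ z ∈ D, g z = ∞) ∨ ∃ G : ℂ → ℂ, MeromorphicOn G D ∧ ∀ z ∈ D, g z = sphValue G z

/-- A family `𝓕` of meromorphic functions is normal on `D`: every sequence from `𝓕` has a
subsequence converging locally uniformly on `D` (spherical metric) to a limit which is
meromorphic on `D` or identically `∞`. -/
def NormalFamilyOn (𝓕 : Set (ℂ → ℂ)) (D : Set ℂ) : Prop :=
  ∀ F : ℕ → ℂ → ℂ, (∀ j, F j ∈ 𝓕) →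
    ∃ t : ℕ → ℕ, StrictMono t ∧ ∃ g : ℂ → OnePoint ℂ,
      MeromOrInftyOn g D ∧ SphLocUnifConvOn (fun j => F (t j)) g D

/-- A sequence of meromorphic functions is normal on `D`. -/
def NormalSeqOn (F : ℕ → ℂ → ℂ) (D : Set ℂ) : Prop :=
  NormalFamilyOn (Set.range F) D

/-- Every pole of `f` in `D` has multiplicity at least `m`. -/
def PolesMultGeOn (f : ℂ → ℂ) (D : Set ℂ) (m : ℕ) : Prop :=
  ∀ z ∈ D, ∀ h : MeromorphicAt f z, meromorphicOrderAt f z < 0 → meromorphicOrderAt f z ≤ ((-(m : ℤ) : ℤ) : WithTop ℤ)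

/-- Every zero of `f` in `D` has multiplicity at least `m`. -/
def ZerosMultGeOn (f : ℂ → ℂ) (D : Set ℂ) (m : ℕ) : Prop :=
  ∀ z ∈ D, ∀ h : MeromorphicAt f z, 0 < meromorphicOrderAt f z → (((m : ℤ) : WithTop ℤ)) ≤ meromorphicOrderAt f z

/-- The meromorphic function `f` omits the value `0` on `D`. -/
def NowhereZeroOn (f : ℂ → ℂ) (D : Set ℂ) : Prop :=
  ∀ z ∈ D, (∀ h : MeromorphicAt f z, ¬ 0 < meromorphicOrderAt f z) ∧ (AnalyticAt ℂ f z → f z ≠ 0)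

/-- The open unit disk in `ℂ`. -/
def unitDisk : Set ℂ := Metric.ball (0 : ℂ) 1

/-- The differential polynomial `Q[f] = f^{x₀} * (f^{x₁})^{(y₁)} * ⋯ * (f^{x_k})^{(y_k)}`.
Its degree is `λ_Q = x₀ + ∑ i, x i` and its weight is `μ_Q = λ_Q + ∑ i, y i`. -/
def Qpoly (x₀ k : ℕ) (x y : Fin k → ℕ) (f : ℂ → ℂ) : ℂ → ℂ :=
  fun z => f z ^ x₀ * ∏ i : Fin k, iteratedDeriv (y i) (fun w => f w ^ x i) z

/-!
Near `z₀` write `f = (z - z₀)^n g` with `g` analytic. Differentiating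
`(z - z₀)^m h = (z - z₀)^(m-1) (m h + (z - z₀) h')` shows that one derivative lowers the
meromorphic order by at most one, so `(f^{x_i})^{(y_i)}` has order at least `n x_i - y_i`.
Orders add under products, hence `Q[f]` has order at least
`n x₀ + ∑ (n x_i - y_i) = (n + 1) λ_Q - μ_Q`.
-/

section
variable {𝕜 : Type*} [NontriviallyNormedField 𝕜] {E : Type*} [NormedAddCommGroup E]
  [NormedSpace 𝕜 E] [CompleteSpace E] {f : 𝕜 → E} {x : 𝕜}

theorem MeromorphicAt.meromorphicOrderAt_le_deriv_add_one (hf : MeromorphicAt f x) :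
    meromorphicOrderAt f x ≤ meromorphicOrderAt (deriv f) x + 1 := by
  cases h : meromorphicOrderAt f x with
  | top =>
    have hf0 : f =ᶠ[𝓝[≠] x] 0 := meromorphicOrderAt_eq_top_iff.1 h
    have : meromorphicOrderAt (deriv f) x = ⊤ := by
      rw [meromorphicOrderAt_eq_top_iff]
      filter_upwards [hf0.nhdsNE_deriv] with z hz
      simpa using hz
    simp [this]
  | coe n =>
    obtain ⟨g, hg, -, hfg : f =ᶠ[𝓝[≠] x] fun z ↦ (z - x) ^ n • g z⟩ :=
      (meromorphicOrderAt_eq_int_iff hf).1 h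
    have hderiv : deriv f =ᶠ[𝓝[≠] x]
        fun z ↦ (z - x) ^ (n - 1) • ((n : 𝕜) • g z + (z - x) • deriv g z) := by
      filter_upwards [hg.eventually_analyticAt.filter_mono nhdsWithin_le_nhds,
        self_mem_nhdsWithin, hfg.nhdsNE_deriv] with z hgz hzne hz
      have hzx : z - x ≠ 0 := sub_ne_zero.2 hzne
      calc
        deriv f z = deriv (fun z ↦ (z - x) ^ n • g z) z := hz
        _ = (z - x) ^ n • deriv g z + deriv ((· ^ n) ∘ (· - x)) z • g z :=
          deriv_fun_smul (by fun_prop (disch := grind)) hgz.differentiableAt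
        _ = (z - x) ^ n • deriv g z + (n * (z - x) ^ (n - 1)) • g z := by
          rw [deriv_comp _ (by fun_prop (disch := grind)) (by fun_prop)]
          simp [deriv_zpow]
        _ = (z - x) ^ (n - 1) • ((n : 𝕜) • g z + (z - x) • deriv g z) := by
          simp [smul_smul, ← zpow_add_one₀ hzx, add_comm, mul_comm]
    have hga : AnalyticAt 𝕜 (fun z ↦ (n : 𝕜) • g z + (z - x) • deriv g z) x := by
      fun_prop
    rw [meromorphicOrderAt_congr hderiv, fun_meromorphicOrderAt_smul (by fun_prop)
      hga.meromorphicAt, fun_meromorphicOrderAt_zpow_id_sub_const]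
    calc (n : WithTop ℤ) = ((n - 1 : ℤ) : WithTop ℤ) + 0 + 1 := by norm_cast; ring
      _ ≤ _ := by gcongr; exact hga.meromorphicOrderAt_nonneg

theorem meromorphicAt_iteratedDeriv (hf : MeromorphicAt f x) (m : ℕ) :
    MeromorphicAt (iteratedDeriv m f) x :=
  iteratedDeriv_eq_iterate (f := f) ▸ hf.iterated_deriv

theorem MeromorphicAt.meromorphicOrderAt_le_iteratedDeriv_add (hf : MeromorphicAt f x) (m : ℕ) :
    meromorphicOrderAt f x ≤ meromorphicOrderAt (iteratedDeriv m f) x + m := by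
  induction m with
  | zero => simp
  | succ m ih =>
    calc meromorphicOrderAt f x ≤ meromorphicOrderAt (iteratedDeriv m f) x + m := ih
      _ ≤ meromorphicOrderAt (iteratedDeriv (m + 1) f) x + 1 + m := by
        rw [iteratedDeriv_succ]
        gcongr
        exact (meromorphicAt_iteratedDeriv hf m).meromorphicOrderAt_le_deriv_add_one
      _ = meromorphicOrderAt (iteratedDeriv (m + 1) f) x + (m + 1 : ℕ) := by
        push_cast; rw [add_assoc, add_comm (1 : WithTop ℤ)]

end

theorem MeromorphicAt.intCast_le_meromorphicOrderAt_iteratedDeriv_pow {𝕜 : Type*}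
    [NontriviallyNormedField 𝕜] [CompleteSpace 𝕜] {f : 𝕜 → 𝕜} {x : 𝕜} {n : ℤ}
    (hf : MeromorphicAt f x) (hn : meromorphicOrderAt f x = n) (p m : ℕ) :
    ((p * n - m : ℤ) : WithTop ℤ) ≤
      meromorphicOrderAt (iteratedDeriv m fun z ↦ f z ^ p) x := by
  have h := (hf.fun_pow p).meromorphicOrderAt_le_iteratedDeriv_add m
  rw [fun_meromorphicOrderAt_pow hf, hn] at h
  have hcast : ((p * n - m : ℤ) : WithTop ℤ) + m = p * n := by
    exact_mod_cast congrArg ((↑) : ℤ → WithTop ℤ) (sub_add_cancel (p * n) (m : ℤ))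
  rwa [← WithTop.add_le_add_iff_right (WithTop.natCast_ne_top m), hcast]

section
variable {x₀ k : ℕ} {x y : Fin k → ℕ} {f : ℂ → ℂ} {z₀ : ℂ}

theorem MeromorphicAt.qpoly (hf : MeromorphicAt f z₀) : MeromorphicAt (Qpoly x₀ k x y f) z₀ :=
  (hf.fun_pow x₀).fun_mul <|
    .fun_prod fun i _ ↦ meromorphicAt_iteratedDeriv (hf.fun_pow (x i)) (y i)

theorem MeromorphicAt.intCast_le_meromorphicOrderAt_qpoly {n : ℤ} (hf : MeromorphicAt f z₀)
    (hn : meromorphicOrderAt f z₀ = n) :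
    ((x₀ * n + ∑ i, (x i * n - y i) : ℤ) : WithTop ℤ) ≤
      meromorphicOrderAt (Qpoly x₀ k x y f) z₀ := by
  have hderiv i : MeromorphicAt (iteratedDeriv (y i) fun z ↦ f z ^ x i) z₀ :=
    meromorphicAt_iteratedDeriv (hf.fun_pow (x i)) (y i)
  unfold Qpoly
  rw [fun_meromorphicOrderAt_mul (hf.fun_pow x₀) (.fun_prod fun i _ ↦ hderiv i),
    meromorphicOrderAt_fun_prod fun i _ ↦ hderiv i, fun_meromorphicOrderAt_pow hf, hn]
  push_cast
  gcongr with i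
  exact hf.intCast_le_meromorphicOrderAt_iteratedDeriv_pow hn (x i) (y i)

end

theorem zero_multiplicity_of_differential_polynomial_general
    (x₀ k : ℕ) (x y : Fin k → ℕ)
    (D : Set ℂ)
    (f : ℂ → ℂ) (hf : MeromorphicOn f D)
    (z₀ : ℂ) (hz₀ : z₀ ∈ D)
    (n : ℕ)
    (horder : meromorphicOrderAt f z₀ = ((n : ℤ) : WithTop ℤ)) :
    ∃ hQ : MeromorphicAt (Qpoly x₀ k x y f) z₀,
      ((((n : ℤ) + 1) * ((x₀ + ∑ i, x i : ℕ) : ℤ)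
          - ((x₀ + ∑ i, x i + ∑ i, y i : ℕ) : ℤ) : ℤ) : WithTop ℤ) ≤ meromorphicOrderAt (Qpoly x₀ k x y f) z₀ := by
  refine ⟨(hf z₀ hz₀).qpoly, ?_⟩
  convert (hf z₀ hz₀).intCast_le_meromorphicOrderAt_qpoly horder using 2
  push_cast [Finset.sum_sub_distrib, ← Finset.sum_mul]
  ring

/-- a zero of `f` of multiplicity `n` is a zero of `Q[f]` of multiplicity
at least `(n+1)λ_Q − μ_Q`. -/
theorem zero_multiplicity_of_differential_polynomial
    (x₀ k : ℕ) (x y : Fin k → ℕ)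
    (hk : 1 ≤ k) (hx₀ : 0 < x₀) (hxy : ∀ i, y i ≤ x i) (hy' : 0 < ∑ i, y i)
    (D : Set ℂ) (hD : IsOpen D)
    (f : ℂ → ℂ) (hf : MeromorphicOn f D)
    (z₀ : ℂ) (hz₀ : z₀ ∈ D)
    (n : ℕ) (hn : 1 ≤ n) (hval : f z₀ = 0)
    (horder : meromorphicOrderAt f z₀ = ((n : ℤ) : WithTop ℤ))
    (hcond : 1 ≤ ((n : ℤ) + 1) * ((x₀ + ∑ i, x i : ℕ) : ℤ)
                - ((x₀ + ∑ i, x i + ∑ i, y i : ℕ) : ℤ)) :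
    ∃ hQ : MeromorphicAt (Qpoly x₀ k x y f) z₀,
      ((((n : ℤ) + 1) * ((x₀ + ∑ i, x i : ℕ) : ℤ)
          - ((x₀ + ∑ i, x i + ∑ i, y i : ℕ) : ℤ) : ℤ) : WithTop ℤ) ≤ meromorphicOrderAt (Qpoly x₀ k x y f) z₀ :=
  zero_multiplicity_of_differential_polynomial_general x₀ k x y D f hf z₀ hz₀ n horder
end
end

section
/- Let m, n be positive integers, let α_1, …, α_n be distinct complex numbers, let n_1, …, n_n be positive integers, let C ∈ ℂ ∖ {0}, and define the rational function f(z) := C / ∏_{i=1}^{n} (z + α_i)^{n_i + m − 1}. Then there exists a polynomial h_Q of degree at most (n−1)·(μ_Q − λ_Q) such that Q[f](z) = h_Q(z) / ∏_{i=1}^{n} (z + α_i)^{λ_Q(n_i + m − 1) + μ_Q − λ_Q} for all z outside {−α_1, …, −α_n}. -/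
open Filter Metric Complex Set MeasureTheory
open scoped OnePoint Topology

noncomputable section

/-!
Away from the poles, write `g = B / D` with `D = ∏ (z + αᵢ) ^ dᵢ`. Since
`D' / D = ∑ dᵢ / (z + αᵢ) = S / L` with `L = ∏ (z + αᵢ)`, the quotient rule gives
`g' = (B' L - B S) / (D L)`: one differentiation raises every exponent by one and the degree of
the numerator by at most `n - 1`. Hence `(f ^ xᵢ)^{(yᵢ)}` is a polynomial of degree at most
`(n - 1) yᵢ` over `∏ (z + αⱼ) ^ (xᵢ (nⱼ + m - 1) + yᵢ)`, and multiplying these quotients with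
`f ^ x₀` adds up numerator degrees and denominator exponents.
-/

open Polynomial Finset

section Field

variable {𝕜 ι : Type*} [Field 𝕜] [Fintype ι]

def RatFormOff (α : ι → 𝕜) (d : ι → ℕ) (B : 𝕜[X]) (g : 𝕜 → 𝕜) : Prop :=
  ∀ z, (∀ i, z ≠ -α i) → g z = B.eval z / ∏ i, (z + α i) ^ d i

namespace RatFormOff

variable {α : ι → 𝕜} {d e : ι → ℕ} {A B : 𝕜[X]} {g h : 𝕜 → 𝕜}

theorem mul (hg : RatFormOff α d A g) (hh : RatFormOff α e B h) :
    RatFormOff α (fun i => d i + e i) (A * B) (fun z => g z * h z) := by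
  intro z hz
  dsimp only
  rw [hg z hz, hh z hz, div_mul_div_comm, eval_mul]
  simp only [pow_add, prod_mul_distrib]

theorem pow (hg : RatFormOff α d B g) (a : ℕ) :
    RatFormOff α (fun i => a * d i) (B ^ a) (fun z => g z ^ a) := by
  intro z hz
  dsimp only
  rw [hg z hz, div_pow, eval_pow, ← Finset.prod_pow]
  simp only [pow_mul']

theorem prod {κ : Type*} (s : Finset κ) {d : κ → ι → ℕ} {B : κ → 𝕜[X]} {g : κ → 𝕜 → 𝕜}
    (hg : ∀ j ∈ s, RatFormOff α (d j) (B j) (g j)) :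
    RatFormOff α (fun i => ∑ j ∈ s, d j i) (∏ j ∈ s, B j) (fun z => ∏ j ∈ s, g j z) := by
  intro z hz
  dsimp only
  rw [prod_congr rfl fun j hj => hg j hj z hz, prod_div_distrib, eval_prod, Finset.prod_comm]
  simp only [prod_pow_eq_pow_sum]

end RatFormOff

variable [DecidableEq ι]

/-- The logarithmic derivative `∑ i, d i / (X + α i)` of `∏ i, (X + α i) ^ d i`, brought to the
common denominator `∏ i, (X + α i)`. -/
def logDerivNum (α : ι → 𝕜) (d : ι → ℕ) : 𝕜[X] :=
  ∑ i, C (d i : 𝕜) * ∏ j ∈ univ.erase i, (X + C (α j))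

theorem natDegree_logDerivNum_le (α : ι → 𝕜) (d : ι → ℕ) :
    (logDerivNum α d).natDegree ≤ Fintype.card ι - 1 := by
  refine natDegree_sum_le_of_forall_le _ _ fun i _ => natDegree_C_mul_le _ _ |>.trans ?_
  refine (natDegree_prod_le _ _).trans ?_
  simp [card_erase_of_mem]

theorem derivative_prod_X_add_C_pow_mul (α : ι → 𝕜) (d : ι → ℕ) :
    derivative (∏ i, (X + C (α i)) ^ d i) * ∏ i, (X + C (α i)) =
      (∏ i, (X + C (α i)) ^ d i) * logDerivNum α d := by
  rw [derivative_prod_finset, logDerivNum, sum_mul, mul_sum]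
  refine sum_congr rfl fun i hi => ?_
  rw [← mul_prod_erase _ _ hi, ← mul_prod_erase _ (fun j => (X + C (α j)) ^ d j) hi]
  simp only [derivative_X_add_C_pow]
  rcases d i with _ | k
  · simp
  · simp only [Nat.add_sub_cancel, Nat.cast_add_one, pow_succ]
    ring

theorem natDegree_derivative_mul_sub_le (α : ι → 𝕜) (d : ι → ℕ) (B : 𝕜[X]) :
    (derivative B * ∏ i, (X + C (α i)) - B * logDerivNum α d).natDegree ≤
      B.natDegree + (Fintype.card ι - 1) := by
  refine (natDegree_sub_le _ _).trans (max_le ?_ ?_)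
  · rcases Nat.eq_zero_or_pos B.natDegree with hB | hB
    · simp [derivative_of_natDegree_zero hB]
    have hL : (∏ i, (X + C (α i))).natDegree ≤ Fintype.card ι :=
      (natDegree_prod_le _ _).trans (by simp)
    have := natDegree_derivative_le B
    have := natDegree_mul_le (p := derivative B) (q := ∏ i, (X + C (α i)))
    omega
  · have := natDegree_logDerivNum_le α d
    exact natDegree_mul_le.trans (by omega)

end Field

section Derivative

variable {𝕜 ι : Type*} [NontriviallyNormedField 𝕜] [Fintype ι] [DecidableEq ι]
  {α : ι → 𝕜} {d : ι → ℕ} {B : 𝕜[X]} {g : 𝕜 → 𝕜}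

theorem hasDerivAt_eval_div_prod_pow {z : 𝕜} (hz : ∀ i, z ≠ -α i) :
    HasDerivAt (fun w => B.eval w / ∏ i, (w + α i) ^ d i)
      ((derivative B * ∏ i, (X + C (α i)) - B * logDerivNum α d).eval z /
        ∏ i, (z + α i) ^ (d i + 1)) z := by
  set D : 𝕜[X] := ∏ i, (X + C (α i)) ^ d i
  set L : 𝕜[X] := ∏ i, (X + C (α i))
  have hne : ∀ i, z + α i ≠ 0 := fun i h => hz i (eq_neg_of_add_eq_zero_left h)
  have hD : ∀ w, D.eval w = ∏ i, (w + α i) ^ d i := fun w => by simp [D, eval_prod]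
  have hDz : D.eval z ≠ 0 := hD z ▸ prod_ne_zero_iff.2 fun i _ => pow_ne_zero _ (hne i)
  have hLz : L.eval z ≠ 0 := by simpa [L, eval_prod, prod_ne_zero_iff] using hne
  have hDL : ∏ i, (z + α i) ^ (d i + 1) = D.eval z * L.eval z := by
    simp [D, L, eval_prod, pow_succ, prod_mul_distrib]
  have hlog : (derivative D).eval z * L.eval z = D.eval z * (logDerivNum α d).eval z := by
    simpa only [eval_mul] using congrArg (eval z) (derivative_prod_X_add_C_pow_mul α d)
  simp only [← hD]
  refine ((B.hasDerivAt z).div (D.hasDerivAt z) hDz).congr_deriv ?_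
  rw [hDL, eval_sub, eval_mul, eval_mul]
  field_simp
  linear_combination -(B.eval z * hlog)

namespace RatFormOff

theorem deriv (hg : RatFormOff α d B g) :
    RatFormOff α (fun i => d i + 1)
      (derivative B * ∏ i, (X + C (α i)) - B * logDerivNum α d) (_root_.deriv g) := by
  intro z hz
  have hloc : g =ᶠ[nhds z] fun w => B.eval w / ∏ i, (w + α i) ^ d i :=
    (Filter.eventually_all.2 fun i => eventually_ne_nhds (hz i)).mono hg
  rw [hloc.deriv_eq, (hasDerivAt_eval_div_prod_pow hz).deriv]

theorem exists_iteratedDeriv (hg : RatFormOff α d B g) (y : ℕ) :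
    ∃ B' : 𝕜[X], B'.natDegree ≤ B.natDegree + (Fintype.card ι - 1) * y ∧
      RatFormOff α (fun i => d i + y) B' (_root_.iteratedDeriv y g) := by
  induction y with
  | zero => exact ⟨B, by simp, by simpa [iteratedDeriv_zero] using hg⟩
  | succ y ih =>
    obtain ⟨B', hdeg, hB'⟩ := ih
    refine ⟨_, (natDegree_derivative_mul_sub_le α (fun i => d i + y) B').trans ?_, ?_⟩
    · rw [mul_add_one]
      omega
    · rw [iteratedDeriv_succ]
      simpa only [add_assoc] using hB'.deriv

end RatFormOff

end Derivative

theorem differential_polynomial_of_rational_function_general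
    (x₀ k : ℕ) (x y : Fin k → ℕ)
    (m n : ℕ)
    (α : Fin n → ℂ)
    (nn : Fin n → ℕ)
    (C : ℂ)
    (f : ℂ → ℂ) (hf : f = fun z => C / ∏ i, (z + α i) ^ (nn i + m - 1)) :
    ∃ hQ : Polynomial ℂ,
      hQ.natDegree ≤ (n - 1) * ((x₀ + ∑ i, x i + ∑ i, y i) - (x₀ + ∑ i, x i)) ∧
      ∀ z : ℂ, (∀ i, z ≠ -α i) →
        Qpoly x₀ k x y f z
          = hQ.eval z / ∏ i, (z + α i) ^
              ((x₀ + ∑ i, x i) * (nn i + m - 1)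
                + ((x₀ + ∑ i, x i + ∑ i, y i) - (x₀ + ∑ i, x i))) := by
  have hf' : RatFormOff α (fun i => nn i + m - 1) (Polynomial.C C) f :=
    fun z _ => by simp [hf]
  choose G hGdeg hG using fun i => (hf'.pow (x i)).exists_iteratedDeriv (y i)
  have hQ := (hf'.pow x₀).mul (RatFormOff.prod univ fun i _ => hG i)
  rw [Nat.add_sub_cancel_left]
  refine ⟨Polynomial.C C ^ x₀ * ∏ i, G i, ?_, fun z hz => (hQ z hz).trans ?_⟩
  · simp only [← C_pow, natDegree_C, zero_add, Fintype.card_fin] at hGdeg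
    calc _ ≤ (∏ i, G i).natDegree := by rw [← C_pow]; exact natDegree_C_mul_le _ _
      _ ≤ ∑ i, (G i).natDegree := natDegree_prod_le _ _
      _ ≤ ∑ i, (n - 1) * y i := sum_le_sum fun i _ => hGdeg i
      _ = (n - 1) * ∑ i, y i := (mul_sum _ _ _).symm
  · simp only [sum_add_distrib, ← sum_mul, add_mul, add_assoc]

/-- the form of `Q[f]` for the rational function
`f(z) = C / ∏ (z + αᵢ)^{nᵢ + m − 1}`. -/
theorem differential_polynomial_of_rational_function
    (x₀ k : ℕ) (x y : Fin k → ℕ)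
    (hk : 1 ≤ k) (hx₀ : 0 < x₀) (hxy : ∀ i, y i ≤ x i) (hy' : 0 < ∑ i, y i)
    (m n : ℕ) (hm : 0 < m) (hn : 0 < n)
    (α : Fin n → ℂ) (hα : Function.Injective α)
    (nn : Fin n → ℕ) (hnn : ∀ i, 0 < nn i)
    (C : ℂ) (hC : C ≠ 0)
    (f : ℂ → ℂ) (hf : f = fun z => C / ∏ i, (z + α i) ^ (nn i + m - 1)) :
    ∃ hQ : Polynomial ℂ,
      hQ.natDegree ≤ (n - 1) * ((x₀ + ∑ i, x i + ∑ i, y i) - (x₀ + ∑ i, x i)) ∧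
      ∀ z : ℂ, (∀ i, z ≠ -α i) →
        Qpoly x₀ k x y f z
          = hQ.eval z / ∏ i, (z + α i) ^
              ((x₀ + ∑ i, x i) * (nn i + m - 1)
                + ((x₀ + ∑ i, x i + ∑ i, y i) - (x₀ + ∑ i, x i))) :=
  differential_polynomial_of_rational_function_general x₀ k x y m n α nn C f hf
end
end
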